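/- Under the total power constraint, for K = 1 or K = 2, D^total_Coded < D^total_Uncoded for all γ_ob, γ_total > 0; for K ≥ 3, D^total_Coded < D^total_Uncoded holds if γ_ob < (γ_total+K)(2γ_total+K)/max((K²−2K)γ_total − K², 0⁺). -/

import Mathlib

/-! Clearing denominators, the uncoded minus the coded distortion is
`((γ + K)(2γ + K) - γ_ob((K² - 2K)γ - K²)) / (γ_ob γ (K + γ)²)`, so coded wins exactly when
`γ_ob((K² - 2K)γ - K²) < (γ + K)(2γ + K)`. The right side is positive, so this holds whenever
`(K² - 2K)γ - K² ≤ 0`, which is always the case for `K = 1, 2`. -/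

lemma uncoded_sub_coded_eq {k γob γ : ℝ} (hk : k ≠ 0) (hob : γob ≠ 0) (hγ : γ ≠ 0)
    (hkγ : k + γ ≠ 0) :
    (1 / (k * γob) + 1 / γ + 1 / (γob * γ)) - (γ / (k * (k + γ) * γob) + (k^2 + γ) / (k + γ)^2)
      = ((γ + k) * (2 * γ + k) - γob * ((k^2 - 2 * k) * γ - k^2)) / (γob * γ * (k + γ)^2) := by
  field_simp
  ring

lemma coded_lt_uncoded_iff {k σ γob γ : ℝ} (hk : 0 < k) (hσ : 0 < σ) (hob : 0 < γob)
    (hγ : 0 < γ) :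
    σ * (γ / (k * (k + γ) * γob) + (k^2 + γ) / (k + γ)^2)
        < σ * (1 / (k * γob) + 1 / γ + 1 / (γob * γ))
      ↔ γob * ((k^2 - 2 * k) * γ - k^2) < (γ + k) * (2 * γ + k) := by
  rw [mul_lt_mul_iff_right₀ hσ, ← sub_pos, uncoded_sub_coded_eq hk.ne' hob.ne' hγ.ne'
    (by positivity), div_pos_iff_of_pos_right (by positivity), sub_pos]

lemma coded_lt_uncoded_of_nonpos {k σ γob γ : ℝ} (hk : 0 < k) (hσ : 0 < σ) (hob : 0 < γob)
    (hγ : 0 < γ) (hc : (k^2 - 2 * k) * γ - k^2 ≤ 0) :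
    σ * (γ / (k * (k + γ) * γob) + (k^2 + γ) / (k + γ)^2)
      < σ * (1 / (k * γob) + 1 / γ + 1 / (γob * γ)) :=
  (coded_lt_uncoded_iff hk hσ hob hγ).2 <|
    (mul_nonpos_of_nonneg_of_nonpos hob.le hc).trans_lt (by positivity)

theorem coded_beats_uncoded_total_power_general
    (K : ℕ) (σθ2 γob γtotal : ℝ)
    (hσ : 0 < σθ2) (hob : 0 < γob) (htot : 0 < γtotal) :
    ((K = 1 ∨ K = 2) →
      σθ2 * (γtotal / ((K : ℝ) * ((K : ℝ) + γtotal) * γob)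
          + ((K : ℝ)^2 + γtotal) / ((K : ℝ) + γtotal)^2)
        < σθ2 * (1 / ((K : ℝ) * γob) + 1 / γtotal + 1 / (γob * γtotal)))
    ∧ (3 ≤ K →
        ((((K : ℝ)^2 - 2 * K) * γtotal - (K : ℝ)^2 ≤ 0)
          ∨ (0 < ((K : ℝ)^2 - 2 * K) * γtotal - (K : ℝ)^2
              ∧ γob * (((K : ℝ)^2 - 2 * K) * γtotal - (K : ℝ)^2)
                  < (γtotal + K) * (2 * γtotal + K))) →
        σθ2 * (γtotal / ((K : ℝ) * ((K : ℝ) + γtotal) * γob)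
            + ((K : ℝ)^2 + γtotal) / ((K : ℝ) + γtotal)^2)
          < σθ2 * (1 / ((K : ℝ) * γob) + 1 / γtotal + 1 / (γob * γtotal))) := by
  constructor
  · rintro (rfl | rfl) <;> refine coded_lt_uncoded_of_nonpos (by norm_num) hσ hob htot ?_ <;>
      norm_num
    linarith
  · rintro hK3 (hc | ⟨-, hc⟩)
    · exact coded_lt_uncoded_of_nonpos (by positivity) hσ hob htot hc
    · exact (coded_lt_uncoded_iff (by positivity) hσ hob htot).2 hc

/-- Total power constraint comparison: coded beats uncoded for K = 1, 2, and for
K ≥ 3 under the low-observation-SNR condition. -/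
theorem coded_beats_uncoded_total_power
    (K : ℕ) (hK : 1 ≤ K) (σθ2 γob γtotal : ℝ)
    (hσ : 0 < σθ2) (hob : 0 < γob) (htot : 0 < γtotal) :
    ((K = 1 ∨ K = 2) →
      σθ2 * (γtotal / ((K : ℝ) * ((K : ℝ) + γtotal) * γob)
          + ((K : ℝ)^2 + γtotal) / ((K : ℝ) + γtotal)^2)
        < σθ2 * (1 / ((K : ℝ) * γob) + 1 / γtotal + 1 / (γob * γtotal)))
    ∧ (3 ≤ K →
        ((((K : ℝ)^2 - 2 * K) * γtotal - (K : ℝ)^2 ≤ 0)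
          ∨ (0 < ((K : ℝ)^2 - 2 * K) * γtotal - (K : ℝ)^2
              ∧ γob * (((K : ℝ)^2 - 2 * K) * γtotal - (K : ℝ)^2)
                  < (γtotal + K) * (2 * γtotal + K))) →
        σθ2 * (γtotal / ((K : ℝ) * ((K : ℝ) + γtotal) * γob)
            + ((K : ℝ)^2 + γtotal) / ((K : ℝ) + γtotal)^2)
          < σθ2 * (1 / ((K : ℝ) * γob) + 1 / γtotal + 1 / (γob * γtotal))) :=
  coded_beats_uncoded_total_power_general K σθ2 γob γtotal hσ hob htot
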